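/- arXiv:1808.02740 — 2 statements merged into one kernel-verified Lean document; each statement's English description precedes it below -/
import Mathlib

section
/- For any digraph D and integer k ≥ 2, κ_k(D) ≤ λ_k(D) ≤ min{δ⁺(D), δ⁻(D)}, where δ⁺ and δ⁻ denote the minimum out-degree and in-degree of D. -/
open Relation Set

variable {V : Type*}

/-- Reachability in a digraph using only arcs from the arc set `B`. -/
def ArcReach (B : Set (V × V)) : V → V → Prop :=
  Relation.ReflTransGen (fun x y => (x, y) ∈ B)

/-- A digraph, given by its arc set on vertex type `V`, is strongly connected. -/
def IsStrong (A : Set (V × V)) : Prop :=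
  ∀ u v : V, ArcReach A u v

/-- `(W, B)` is an `S`-strong subgraph of the digraph with arc set `A`:
a strongly connected subdigraph whose vertex set contains `S`. -/
def SStrongSub (A : Set (V × V)) (S W : Set V) (B : Set (V × V)) : Prop :=
  B ⊆ A ∧ S ⊆ W ∧ (∀ e ∈ B, e.1 ∈ W ∧ e.2 ∈ W) ∧
    ∀ u ∈ W, ∀ v ∈ W, ArcReach B u v

/-- `λ_S(D)`: the maximum number of pairwise arc-disjoint `S`-strong subgraphs. -/
noncomputable def lamS (A : Set (V × V)) (S : Set V) : ℕ :=
  sSup {t | ∃ (W : Fin t → Set V) (B : Fin t → Set (V × V)),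
    (∀ i, SStrongSub A S (W i) (B i)) ∧
    ∀ i j, i ≠ j → Disjoint (B i) (B j)}

/-- `κ_S(D)`: the maximum number of pairwise internally disjoint
(arc-disjoint, vertex sets meeting exactly in `S`) `S`-strong subgraphs. -/
noncomputable def kapS (A : Set (V × V)) (S : Set V) : ℕ :=
  sSup {t | ∃ (W : Fin t → Set V) (B : Fin t → Set (V × V)),
    (∀ i, SStrongSub A S (W i) (B i)) ∧
    (∀ i j, i ≠ j → Disjoint (B i) (B j)) ∧
    ∀ i j, i ≠ j → W i ∩ W j = S}

/-- Strong subgraph `k`-arc-connectivity `λ_k(D)`. -/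
noncomputable def lamK [Fintype V] (A : Set (V × V)) (k : ℕ) : ℕ :=
  sInf {m | ∃ S : Finset V, S.card = k ∧ m = lamS A ↑S}

/-- Strong subgraph `k`-connectivity `κ_k(D)`. -/
noncomputable def kapK [Fintype V] (A : Set (V × V)) (k : ℕ) : ℕ :=
  sInf {m | ∃ S : Finset V, S.card = k ∧ m = kapS A ↑S}

/-- The minimum out-degree `δ⁺(D)`. -/
noncomputable def minOutDeg {V : Type*} [Fintype V] (A : Set (V × V)) : ℕ :=
  sInf {d | ∃ v : V, d = {u | (v, u) ∈ A}.ncard}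

/-- The minimum in-degree `δ⁻(D)`. -/
noncomputable def minInDeg {V : Type*} [Fintype V] (A : Set (V × V)) : ℕ :=
  sInf {d | ∃ v : V, d = {u | (u, v) ∈ A}.ncard}

/-! If `u ≠ v` both lie in `S`, every `S`-strong subgraph has a path from `v` to `u` and one from
`u` to `v`, hence an arc leaving `v` and an arc entering `v`. Arc-disjoint `S`-strong subgraphs
therefore use distinct out-arcs and distinct in-arcs of `v`, so `λ_S(D)` is at most the out- and
in-degree of every vertex of `S`. For `k ≥ 2` each vertex lies in a `k`-set with a second vertex,
which bounds `λ_k(D)` by every degree. Internally disjoint families are arc-disjoint, so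
`κ_S(D) ≤ λ_S(D)`. -/

open Function

theorem le_ncard_of_pairwise_disjoint {α : Type*} {X : Set α} {t : ℕ} {B : Fin t → Set α}
    (hB : Pairwise (Disjoint on B)) (hmeet : ∀ i, (B i ∩ X).Nonempty)
    (hX : X.Finite := by toFinite_tac) : t ≤ X.ncard := by
  choose f hf using hmeet
  have hinj : InjOn f univ := fun i _ j _ hij =>
    hB.eq (not_disjoint_iff.2 ⟨f i, (hf i).1, hij ▸ (hf j).1⟩)
  simpa using ncard_le_ncard_of_injOn f (fun i _ => (hf i).2) hinj hX

theorem Nat.sInf_le_sInf_of_forall_le {ι : Type*} {P : ι → Prop} {f g : ι → ℕ}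
    (h : ∀ i, P i → f i ≤ g i) :
    sInf {m | ∃ i, P i ∧ m = f i} ≤ sInf {m | ∃ i, P i ∧ m = g i} := by
  by_cases hP : ∃ i, P i
  · obtain ⟨i₀, hi₀⟩ := hP
    refine le_csInf ⟨g i₀, i₀, hi₀, rfl⟩ ?_
    rintro _ ⟨i, hi, rfl⟩
    exact le_trans (Nat.sInf_le ⟨i, hi, rfl⟩) (h i hi)
  · refine (Nat.sInf_eq_zero.2 (Or.inr ?_)).trans_le (Nat.zero_le _)
    refine eq_empty_of_forall_notMem ?_
    rintro _ ⟨i, hi, -⟩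
    exact hP ⟨i, hi⟩

section Packing

variable {V : Type*} {A B : Set (V × V)} {S W : Set V} {u v : V}

theorem SStrongSub.exists_arc_out (h : SStrongSub A S W B) (hu : u ∈ S) (hv : v ∈ S)
    (huv : u ≠ v) : ∃ w, (v, w) ∈ B := by
  obtain ⟨-, hSW, -, hreach⟩ := h
  rcases (hreach v (hSW hv) u (hSW hu)).cases_head with h | ⟨w, hw, -⟩
  · exact absurd h.symm huv
  · exact ⟨w, hw⟩

theorem SStrongSub.exists_arc_in (h : SStrongSub A S W B) (hu : u ∈ S) (hv : v ∈ S)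
    (huv : u ≠ v) : ∃ w, (w, v) ∈ B := by
  obtain ⟨-, hSW, -, hreach⟩ := h
  rcases (hreach u (hSW hu) v (hSW hv)).cases_tail with h | ⟨w, -, hw⟩
  · exact absurd h huv.symm
  · exact ⟨w, hw⟩

theorem lamS_le {n : ℕ}
    (h : ∀ t (Ws : Fin t → Set V) (Bs : Fin t → Set (V × V)),
      (∀ i, SStrongSub A S (Ws i) (Bs i)) → Pairwise (Disjoint on Bs) → t ≤ n) :
    lamS A S ≤ n :=
  csSup_le ⟨0, finZeroElim, finZeroElim, finZeroElim, finZeroElim⟩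
    fun t ⟨Ws, Bs, hsub, hdisj⟩ => h t Ws Bs hsub hdisj

variable [Finite V] {t : ℕ} {Ws : Fin t → Set V} {Bs : Fin t → Set (V × V)}

theorem card_packing_le_outDeg (hsub : ∀ i, SStrongSub A S (Ws i) (Bs i))
    (hdisj : Pairwise (Disjoint on Bs)) (hu : u ∈ S) (hv : v ∈ S) (huv : u ≠ v) :
    t ≤ {w | (v, w) ∈ A}.ncard := by
  refine le_ncard_of_pairwise_disjoint (B := fun i => Prod.mk v ⁻¹' Bs i)
    (fun i j hij => (hdisj hij).preimage _) fun i => ?_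
  obtain ⟨w, hw⟩ := (hsub i).exists_arc_out hu hv huv
  exact ⟨w, hw, (hsub i).1 hw⟩

theorem card_packing_le_inDeg (hsub : ∀ i, SStrongSub A S (Ws i) (Bs i))
    (hdisj : Pairwise (Disjoint on Bs)) (hu : u ∈ S) (hv : v ∈ S) (huv : u ≠ v) :
    t ≤ {w | (w, v) ∈ A}.ncard := by
  refine le_ncard_of_pairwise_disjoint (B := fun i => (·, v) ⁻¹' Bs i)
    (fun i j hij => (hdisj hij).preimage _) fun i => ?_
  obtain ⟨w, hw⟩ := (hsub i).exists_arc_in hu hv huv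
  exact ⟨w, hw, (hsub i).1 hw⟩

theorem lamS_le_outDeg (hu : u ∈ S) (hv : v ∈ S) (huv : u ≠ v) :
    lamS A S ≤ {w | (v, w) ∈ A}.ncard :=
  lamS_le fun _ _ _ hsub hdisj => card_packing_le_outDeg hsub hdisj hu hv huv

theorem lamS_le_inDeg (hu : u ∈ S) (hv : v ∈ S) (huv : u ≠ v) :
    lamS A S ≤ {w | (w, v) ∈ A}.ncard :=
  lamS_le fun _ _ _ hsub hdisj => card_packing_le_inDeg hsub hdisj hu hv huv

theorem kapS_le_lamS (hu : u ∈ S) (hv : v ∈ S) (huv : u ≠ v) : kapS A S ≤ lamS A S :=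
  csSup_le_csSup
    ⟨_, fun _ ⟨_, _, hsub, hdisj⟩ => card_packing_le_outDeg hsub hdisj hu hv huv⟩
    ⟨0, finZeroElim, finZeroElim, finZeroElim, finZeroElim, finZeroElim⟩
    fun _ ⟨Ws, Bs, hsub, hdisj, _⟩ => ⟨Ws, Bs, hsub, hdisj⟩

end Packing

section Connectivity

variable {V : Type*} [Fintype V] (A : Set (V × V)) {k : ℕ}

theorem kapK_le_lamK (hk : 2 ≤ k) : kapK A k ≤ lamK A k :=
  Nat.sInf_le_sInf_of_forall_le fun S hS => by
    obtain ⟨u, hu, v, hv, huv⟩ := Finset.one_lt_card.1 (hS ▸ hk : 1 < S.card)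
    exact kapS_le_lamS (S := ↑S) hu hv huv

theorem lamK_eq_zero_of_card_lt (hk : Fintype.card V < k) : lamK A k = 0 :=
  Nat.sInf_eq_zero.2 <| Or.inr <| eq_empty_of_forall_notMem fun _ ⟨S, hS, _⟩ =>
    (hS ▸ S.card_le_univ).not_gt hk

theorem lamK_le_lamS {S : Finset V} (hS : S.card = k) : lamK A k ≤ lamS A S :=
  Nat.sInf_le ⟨S, hS, rfl⟩

variable {A}

theorem exists_finset_card_eq_mem_ne (hk : 2 ≤ k) (hkV : k ≤ Fintype.card V) (v : V) :
    ∃ S : Finset V, S.card = k ∧ v ∈ S ∧ ∃ u ∈ S, u ≠ v := by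
  obtain ⟨S, hvS, hS⟩ := Finset.exists_superset_card_eq (s := {v})
    (by rw [Finset.card_singleton]; omega) hkV
  exact ⟨S, hS, hvS (Finset.mem_singleton_self v), Finset.exists_mem_ne (by omega) v⟩

theorem lamK_le_outDeg (hk : 2 ≤ k) (hkV : k ≤ Fintype.card V) (v : V) :
    lamK A k ≤ {w | (v, w) ∈ A}.ncard := by
  obtain ⟨S, hS, hv, u, hu, huv⟩ := exists_finset_card_eq_mem_ne hk hkV v
  exact (lamK_le_lamS A hS).trans (lamS_le_outDeg (S := ↑S) hu hv huv)

theorem lamK_le_inDeg (hk : 2 ≤ k) (hkV : k ≤ Fintype.card V) (v : V) :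
    lamK A k ≤ {w | (w, v) ∈ A}.ncard := by
  obtain ⟨S, hS, hv, u, hu, huv⟩ := exists_finset_card_eq_mem_ne hk hkV v
  exact (lamK_le_lamS A hS).trans (lamS_le_inDeg (S := ↑S) hu hv huv)

theorem le_minOutDeg [Nonempty V] {n : ℕ} (h : ∀ v, n ≤ {w | (v, w) ∈ A}.ncard) :
    n ≤ minOutDeg A :=
  le_csInf ⟨_, Classical.arbitrary V, rfl⟩ fun _ ⟨v, hv⟩ => hv ▸ h v

theorem le_minInDeg [Nonempty V] {n : ℕ} (h : ∀ v, n ≤ {w | (w, v) ∈ A}.ncard) :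
    n ≤ minInDeg A :=
  le_csInf ⟨_, Classical.arbitrary V, rfl⟩ fun _ ⟨v, hv⟩ => hv ▸ h v

end Connectivity

/-- `κ_k(D) ≤ λ_k(D) ≤ min{δ⁺(D), δ⁻(D)}` for every `k ≥ 2`. -/
theorem kapK_le_lamK_le_minDeg {V : Type*} [Fintype V] (A : Set (V × V))
    (k : ℕ) (h2 : 2 ≤ k) :
    kapK A k ≤ lamK A k ∧ lamK A k ≤ min (minOutDeg A) (minInDeg A) := by
  refine ⟨kapK_le_lamK A h2, ?_⟩
  rcases le_or_gt k (Fintype.card V) with hkV | hkV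
  · have : Nonempty V := Fintype.card_pos_iff.1 (by omega)
    exact le_min (le_minOutDeg (lamK_le_outDeg h2 hkV)) (le_minInDeg (lamK_le_inDeg h2 hkV))
  · rw [lamK_eq_zero_of_card_lt A hkV]
    exact Nat.zero_le _
end

section
/- Let D be a digraph with arc-strong connectivity λ(D) = ℓ and let 2 ≤ k ≤ ℓ. Then λ_k(D) ≥ ⌊ℓ/k⌋. -/
open Relation Set

variable {V : Type*}

/-- The arc-strong connectivity `λ(D)`: the minimum number of arcs whose
deletion destroys strong connectivity. -/
noncomputable def arcConn {V : Type*} [Fintype V] (A : Set (V × V)) : ℕ :=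
  sInf {m | ∃ F : Finset (V × V), ↑F ⊆ A ∧ F.card = m ∧ ¬ IsStrong (A \ ↑F)}

/-!
Let `t = ⌊λ(D)/|S|⌋`. Every nonempty proper vertex set `X` has in-degree at least
`λ(D) ≥ t|S|`, so Edmonds' branching theorem (multi-root form) yields `t|S|` arc-disjoint
spanning out-branchings, `t` of them rooted at each vertex of `S`. Grouping them into `t`
families containing one branching per root, the union of a family contains walks between any
two vertices of `S`, and the strong component of `S` in it is an `S`-strong subgraph.

Edmonds' theorem is proved by Lovász's argument: grow the first branching one arc at a time,
taking an arc from the vertices reached so far into a minimal tight set; uncrossing tight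
sets by submodularity of the in-degree shows that the cut condition for the remaining roots
is preserved.
-/

open Finset Function

section Cuts

variable {ι : Type*} [DecidableEq V]

def indeg (A : Finset (V × V)) (X : Finset V) : ℕ :=
  #{e ∈ A | e.1 ∉ X ∧ e.2 ∈ X}

def numRootsOutside (r : ι → V) (I : Finset ι) (X : Finset V) : ℕ :=
  #{i ∈ I | r i ∉ X}

lemma indeg_union_add_indeg_inter_le (A : Finset (V × V)) (X Y : Finset V) :
    indeg A (X ∪ Y) + indeg A (X ∩ Y) ≤ indeg A X + indeg A Y := by
  simp only [indeg, card_filter, ← sum_add_distrib]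
  refine sum_le_sum fun e _ => ?_
  by_cases h1 : e.1 ∈ X <;> by_cases h2 : e.1 ∈ Y <;>
    by_cases h3 : e.2 ∈ X <;> by_cases h4 : e.2 ∈ Y <;>
    simp [h1, h2, h3, h4]

lemma indeg_erase_add_one {A : Finset (V × V)} {e : V × V} {X : Finset V} (he : e ∈ A)
    (h1 : e.1 ∉ X) (h2 : e.2 ∈ X) : indeg (A.erase e) X + 1 = indeg A X := by
  rw [indeg, indeg, filter_erase, card_erase_add_one (mem_filter.2 ⟨he, h1, h2⟩)]

lemma indeg_erase_of_not_enters {A : Finset (V × V)} {e : V × V} {X : Finset V}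
    (h : ¬(e.1 ∉ X ∧ e.2 ∈ X)) : indeg (A.erase e) X = indeg A X := by
  rw [indeg, indeg, filter_erase]
  exact congrArg card (erase_eq_of_notMem fun he => h (mem_filter.1 he).2)

lemma numRootsOutside_union_add_inter (r : ι → V) (I : Finset ι) (X Y : Finset V) :
    numRootsOutside r I (X ∪ Y) + numRootsOutside r I (X ∩ Y) =
      numRootsOutside r I X + numRootsOutside r I Y := by
  simp only [numRootsOutside, card_filter, ← sum_add_distrib]
  refine sum_congr rfl fun i _ => ?_
  by_cases h1 : r i ∈ X <;> by_cases h2 : r i ∈ Y <;> simp [h1, h2]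

lemma numRootsOutside_anti (r : ι → V) (I : Finset ι) {X Y : Finset V} (h : X ⊆ Y) :
    numRootsOutside r I Y ≤ numRootsOutside r I X :=
  card_le_card fun i hi => by
    simp only [mem_filter] at hi ⊢
    exact ⟨hi.1, fun hX => hi.2 (h hX)⟩

lemma numRootsOutside_insert [DecidableEq ι] (r : ι → V) {I : Finset ι} {a : ι} (ha : a ∉ I)
    (X : Finset V) :
    numRootsOutside r (insert a I) X = numRootsOutside r I X + if r a ∈ X then 0 else 1 := by
  by_cases h : r a ∈ X <;> simp [numRootsOutside, filter_insert, h, ha]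

end Cuts

lemma ArcReach.mono {B B' : Set (V × V)} (h : B ⊆ B') {a b : V} (hr : ArcReach B a b) :
    ArcReach B' a b :=
  Relation.ReflTransGen.mono (r := fun x y => (x, y) ∈ B) (fun _ _ hxy => h hxy) a b hr

lemma ArcReach.mem_of_closed {B : Set (V × V)} {X : Set V} {a b : V} (h : ArcReach B a b)
    (ha : a ∈ X) (hX : ∀ e ∈ B, e.1 ∈ X → e.2 ∈ X) : b ∈ X := by
  induction h with
  | refl => exact ha
  | tail _ he ih => exact hX _ he ih

section Branchings

variable {ι : Type*} [DecidableEq V]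

def CutCondition (r : ι → V) (I : Finset ι) (A : Finset (V × V)) : Prop :=
  ∀ X : Finset V, X.Nonempty → numRootsOutside r I X ≤ indeg A X

/-- The branching under construction, spanning `U`, counts as one more root lying in `U`. -/
def GrowthCondition (r : ι → V) (I : Finset ι) (U : Finset V) (A : Finset (V × V)) : Prop :=
  CutCondition r I A ∧
    ∀ X : Finset V, X.Nonempty → Disjoint X U → numRootsOutside r I X < indeg A X

variable {r : ι → V} {I : Finset ι}

lemma CutCondition.inter_tight {A : Finset (V × V)} (hc : CutCondition r I A) {X Y : Finset V}
    (hX : indeg A X ≤ numRootsOutside r I X) (hY : indeg A Y ≤ numRootsOutside r I Y)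
    (hXY : (X ∩ Y).Nonempty) : indeg A (X ∩ Y) ≤ numRootsOutside r I (X ∩ Y) := by
  have := indeg_union_add_indeg_inter_le A X Y
  have := numRootsOutside_union_add_inter r I X Y
  have := hc (X ∪ Y) (hXY.mono inter_subset_union)
  omega

lemma GrowthCondition.exists_arc_into_sdiff {U : Finset V} {A : Finset (V × V)}
    (hc : GrowthCondition r I U A) {M : Finset V}
    (hM : indeg A M ≤ numRootsOutside r I M) (hMU : (M \ U).Nonempty) :
    ∃ e ∈ A, e.1 ∈ M ∧ e.1 ∈ U ∧ e.2 ∈ M ∧ e.2 ∉ U := by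
  by_contra! h
  have hle : indeg A (M \ U) ≤ indeg A M := card_le_card fun e he => by
    simp only [mem_filter, Finset.mem_sdiff, not_and, not_not] at he ⊢
    obtain ⟨heA, he1, he2M, he2U⟩ := he
    refine ⟨heA, fun he1M => ?_, he2M⟩
    exact he2U (h e heA he1M (he1 he1M) he2M)
  have := numRootsOutside_anti r I (sdiff_subset : M \ U ⊆ M)
  have := hc.2 _ hMU sdiff_disjoint
  omega

lemma GrowthCondition.exists_arc_extending [Fintype V] {U : Finset V} {A : Finset (V × V)}
    (hc : GrowthCondition r I U A) (hU : U ≠ Finset.univ) :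
    ∃ u ∈ U, ∃ w ∉ U, (u, w) ∈ A ∧ GrowthCondition r I (insert w U) (A.erase (u, w)) := by
  obtain ⟨M, hM, hMmin⟩ := exists_min_image
    {M : Finset V | indeg A M ≤ numRootsOutside r I M ∧ (M \ U).Nonempty} card
    ⟨Finset.univ, mem_filter.2 ⟨mem_univ _, by simp [indeg],
      by rwa [Finset.sdiff_nonempty, Finset.univ_subset_iff]⟩⟩
  obtain ⟨-, hMt, hMU⟩ := mem_filter.1 hM
  obtain ⟨⟨u, w⟩, he, huM, huU, hwM, hwU⟩ := hc.exists_arc_into_sdiff hMt hMU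
  -- by minimality of `M`, no tight set contains `w` but not `u`
  have hstrict : ∀ X : Finset V, u ∉ X → w ∈ X → numRootsOutside r I X < indeg A X := by
    intro X huX hwX
    by_contra! hXt
    have hwXM : w ∈ X ∩ M := mem_inter.2 ⟨hwX, hwM⟩
    have hle := hMmin (X ∩ M) (mem_filter.2 ⟨mem_univ _, hc.1.inter_tight hXt hMt ⟨w, hwXM⟩,
      w, mem_sdiff.2 ⟨hwXM, hwU⟩⟩)
    have hlt : #(X ∩ M) < #M := card_lt_card <|
      Finset.ssubset_iff_subset_ne.2 ⟨inter_subset_right, fun h => huX (mem_inter.1 (h ▸ huM)).1⟩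
    omega
  refine ⟨u, huU, w, hwU, he, fun X hX => ?_, fun X hX hXU => ?_⟩
  · by_cases hent : u ∉ X ∧ w ∈ X
    · have := indeg_erase_add_one he hent.1 hent.2
      have := hstrict X hent.1 hent.2
      omega
    · rw [indeg_erase_of_not_enters hent]
      exact hc.1 X hX
  · rw [Finset.disjoint_insert_right] at hXU
    rw [indeg_erase_of_not_enters fun h => hXU.1 h.2]
    exact hc.2 X hX hXU.2

theorem GrowthCondition.exists_branching [Fintype V] {r₀ : V} {U : Finset V}
    {A F : Finset (V × V)} (hr₀ : r₀ ∈ U) (hFA : F ⊆ A)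
    (hF : ∀ v ∈ U, ArcReach (F : Set (V × V)) r₀ v)
    (hc : GrowthCondition r I U (A \ F)) :
    ∃ F' ⊆ A, (∀ v, ArcReach (F' : Set (V × V)) r₀ v) ∧ CutCondition r I (A \ F') := by
  by_cases hU : U = Finset.univ
  · subst hU
    exact ⟨F, hFA, fun v => hF v (mem_univ v), hc.1⟩
  obtain ⟨u, hu, w, hw, he, hc'⟩ := hc.exists_arc_extending hU
  rw [← sdiff_insert] at hc'
  refine GrowthCondition.exists_branching (mem_insert_of_mem hr₀)
    (insert_subset (mem_sdiff.1 he).1 hFA) (fun v hv => ?_) hc'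
  have hF' : (F : Set (V × V)) ⊆ ↑(insert (u, w) F) := by simp [Set.subset_insert]
  rcases mem_insert.1 hv with rfl | hv
  · exact ((hF u hu).mono hF').tail (by simp)
  · exact (hF v hv).mono hF'
termination_by #Uᶜ
decreasing_by exact card_lt_card (compl_ssubset_compl.2 (ssubset_insert hw))

theorem CutCondition.exists_pairwiseDisjoint_branchings [Fintype V] [DecidableEq ι]
    {A : Finset (V × V)} (h : CutCondition r I A) :
    ∃ F : ι → Finset (V × V), (∀ i ∈ I, F i ⊆ A) ∧ (I : Set ι).PairwiseDisjoint F ∧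
      ∀ i ∈ I, ∀ v, ArcReach (F i : Set (V × V)) (r i) v := by
  induction I using Finset.induction_on generalizing A with
  | empty => exact ⟨fun _ => ∅, by simp, by simp, by simp⟩
  | insert a I ha ih =>
    have hstart : GrowthCondition r I {r a} (A \ ∅) := by
      rw [Finset.sdiff_empty]
      refine ⟨fun X hX => ?_, fun X hX hXa => ?_⟩ <;>
        have := numRootsOutside_insert r ha X ▸ h X hX
      · split_ifs at this <;> omega
      · rw [if_neg (disjoint_singleton_right.1 hXa)] at this
        omega
    obtain ⟨Fa, hFaA, hFa, hrest⟩ := hstart.exists_branching (mem_singleton_self _)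
      (empty_subset _) (by simp [ArcReach, Relation.ReflTransGen.refl])
    obtain ⟨F, hFA, hFdisj, hF⟩ := ih hrest
    refine ⟨Function.update F a Fa, fun i hi => ?_, ?_, fun i hi => ?_⟩
    · rcases eq_or_ne i a with rfl | hia
      · simpa using hFaA
      · simpa [hia] using (hFA i ((mem_insert.1 hi).resolve_left hia)).trans sdiff_subset
    · rw [coe_insert, Set.pairwiseDisjoint_insert]
      refine ⟨fun i hi j hj hij => ?_, fun j hj haj => ?_⟩
      · have hia : i ≠ a := fun h => ha (h ▸ hi)
        have hja : j ≠ a := fun h => ha (h ▸ hj)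
        simpa [Function.onFun, hia, hja] using hFdisj hi hj hij
      · rw [Function.update_self, Function.update_of_ne haj.symm]
        exact Finset.disjoint_left.2 fun e he he' => (Finset.mem_sdiff.1 (hFA j hj he')).2 he
    · rcases eq_or_ne i a with rfl | hia
      · simpa using hFa
      · simpa [hia] using hF i ((mem_insert.1 hi).resolve_left hia)

end Branchings

lemma exists_sStrongSub_of_forall_arcReach {A B : Set (V × V)} {S : Set V} (hBA : B ⊆ A)
    (hS : ∀ s ∈ S, ∀ s' ∈ S, ArcReach B s s') :
    ∃ W B', B' ⊆ B ∧ SStrongSub A S W B' := by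
  -- `W` is the strong component of `S` in `B`
  set W : Set V := {x | (∃ s ∈ S, ArcReach B s x) ∧ ∃ s ∈ S, ArcReach B x s}
  set B' : Set (V × V) := {e ∈ B | e.1 ∈ W ∧ e.2 ∈ W}
  have hwalk : ∀ {a c z : V}, a ∈ W → z ∈ W → ArcReach B a c → ArcReach B c z →
      ArcReach B' a c := by
    intro a c z ha hz hac hcz
    induction hac with
    | refl => exact Relation.ReflTransGen.refl
    | @tail c d hac hcd ih =>
      have hcz' : ArcReach B c z := Relation.ReflTransGen.head hcd hcz
      obtain ⟨s, hs, hsa⟩ := ha.1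
      obtain ⟨s', hs', hzs'⟩ := hz.2
      have hcW : c ∈ W := ⟨⟨s, hs, hsa.trans hac⟩, s', hs', hcz'.trans hzs'⟩
      have hdW : d ∈ W := ⟨⟨s, hs, (hsa.trans hac).tail hcd⟩, s', hs', hcz.trans hzs'⟩
      exact (ih hcz').tail ⟨hcd, hcW, hdW⟩
  refine ⟨W, B', fun e he => he.1, ⟨fun e he => hBA he.1, fun s hs => ?_, fun e he => he.2,
    fun u hu v hv => ?_⟩⟩
  · exact ⟨⟨s, hs, Relation.ReflTransGen.refl⟩, s, hs, Relation.ReflTransGen.refl⟩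
  · obtain ⟨s, hs, hus⟩ := hu.2
    obtain ⟨s', hs', hs'v⟩ := hv.1
    exact hwalk hu hv (hus.trans ((hS s hs s' hs').trans hs'v)) Relation.ReflTransGen.refl

lemma le_lamS [Finite V] {A : Set (V × V)} {S : Set V} (hS : S.Nontrivial) {t : ℕ}
    (W : Fin t → Set V) (B : Fin t → Set (V × V)) (hsub : ∀ i, SStrongSub A S (W i) (B i))
    (hdisj : Pairwise (Disjoint on B)) : t ≤ lamS A S := by
  obtain ⟨a, ha, b, hb, hab⟩ := hS
  refine le_csSup ⟨Nat.card (V × V), ?_⟩ ⟨W, B, hsub, hdisj⟩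
  rintro n ⟨W', B', hsub', hdisj'⟩
  -- the arc sets are nonempty (they join `a` to `b`) and pairwise disjoint
  have hne : ∀ i, (B' i).Nonempty := fun i => by
    obtain ⟨-, hSW, -, hreach⟩ := hsub' i
    rcases Relation.ReflTransGen.cases_tail (hreach a (hSW ha) b (hSW hb)) with h | ⟨c, -, hcb⟩
    · exact absurd h.symm hab
    · exact ⟨_, hcb⟩
  choose f hf using hne
  have hf_inj : Function.Injective f := fun i j hij => by
    by_contra h
    exact Set.disjoint_left.1 (hdisj' i j h) (hf i) (hij ▸ hf j)
  simpa using Nat.card_le_card_of_injective f hf_inj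

section ArcConnectivity

variable [Fintype V]

lemma arcConn_le_indeg [DecidableEq V] (A : Finset (V × V)) {X : Finset V} (hX : X.Nonempty)
    (hXV : X ≠ Finset.univ) : arcConn (A : Set (V × V)) ≤ indeg A X := by
  obtain ⟨b, hb⟩ := hX
  obtain ⟨a, ha⟩ : ∃ a, a ∉ X := by simpa [Finset.eq_univ_iff_forall] using hXV
  refine Nat.sInf_le ⟨{e ∈ A | e.1 ∉ X ∧ e.2 ∈ X}, coe_subset.2 (filter_subset _ _), rfl,
    fun hstrong => ?_⟩
  exact (hstrong a b).mem_of_closed (X := (↑X)ᶜ) ha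
    (fun e he h1 h2 => he.2 (mem_filter.2 ⟨he.1, h1, h2⟩)) hb

lemma arcConn_le_card_sub_one (A : Set (V × V)) : arcConn A ≤ Fintype.card V - 1 := by
  classical
  rcases subsingleton_or_nontrivial V with hV | hV
  · have hall : ∀ B : Set (V × V), IsStrong B := fun B u v =>
      Subsingleton.elim u v ▸ Relation.ReflTransGen.refl
    have : arcConn A = 0 := Nat.sInf_eq_zero.2 <| Or.inr <|
      Set.eq_empty_of_forall_notMem fun m ⟨F, _, _, hF⟩ => hF (hall _)
    omega
  obtain ⟨v, w, hvw⟩ := exists_pair_ne V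
  have hcut := arcConn_le_indeg A.toFinset (singleton_nonempty v)
    fun h => hvw (Finset.mem_singleton.1 (h ▸ Finset.mem_univ w)).symm
  rw [Set.coe_toFinset] at hcut
  refine hcut.trans ?_
  -- an arc entering `{v}` is determined by its tail
  calc indeg A.toFinset {v} ≤ #(Finset.univ.erase v) := by
        refine card_le_card_of_injOn Prod.fst (fun e he => ?_) fun e he e' he' h => ?_
        · rw [mem_coe, mem_filter, Finset.mem_singleton] at he
          simpa using he.2.1
        · simp only [mem_coe, mem_filter, Finset.mem_singleton] at he he'
          exact Prod.ext h (he.2.2.trans he'.2.2.symm)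
    _ = Fintype.card V - 1 := by simp

theorem arcConn_div_card_le_lamS (A : Set (V × V)) (S : Finset V) (hS : 1 < #S) :
    arcConn A / #S ≤ lamS A S := by
  classical
  set t := arcConn A / #S
  -- branching `(j, s)` is rooted at `s`
  have hcut : CutCondition Prod.snd (Finset.univ ×ˢ S : Finset (Fin t × V)) A.toFinset := by
    intro X hX
    by_cases hXV : X = Finset.univ
    · simp [numRootsOutside, hXV]
    calc numRootsOutside Prod.snd (Finset.univ ×ˢ S) X ≤ #(Finset.univ ×ˢ S) :=
          card_filter_le _ _
      _ = t * #S := by simp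
      _ ≤ arcConn A := Nat.div_mul_le_self _ _
      _ = arcConn (A.toFinset : Set (V × V)) := by rw [Set.coe_toFinset]
      _ ≤ indeg A.toFinset X := arcConn_le_indeg _ hX hXV
  obtain ⟨F, hFA, hFdisj, hF⟩ := hcut.exists_pairwiseDisjoint_branchings
  have hsub : ∀ j : Fin t, ∃ W B, B ⊆ ↑(S.biUnion fun s => F (j, s)) ∧ SStrongSub A S W B := by
    intro j
    refine exists_sStrongSub_of_forall_arcReach ?_ fun s hs s' _ => (hF (j, s) ?_ s').mono ?_
    · simpa [Set.coe_toFinset] using fun s hs => hFA (j, s) (by simpa using hs)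
    · simpa using hs
    · exact coe_subset.2 (subset_biUnion_of_mem (fun s => F (j, s)) hs)
  choose W B hBF hWB using hsub
  refine le_lamS (one_lt_card_iff_nontrivial.1 hS) W B hWB fun j j' hjj' => ?_
  refine Disjoint.mono (hBF j) (hBF j') (disjoint_coe.2 ?_)
  simp only [disjoint_biUnion_left, disjoint_biUnion_right]
  exact fun s hs s' hs' => hFdisj (by simpa using hs') (by simpa using hs) (by simp [hjj'])

end ArcConnectivity

theorem lamK_ge_arcConn_div_general {V : Type*} [Fintype V] (A : Set (V × V)) (k ℓ : ℕ)
    (hl : arcConn A = ℓ) (h2 : 2 ≤ k) :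
    ℓ / k ≤ lamK A k := by
  rcases Nat.eq_zero_or_pos (ℓ / k) with h0 | hpos
  · simp [h0]
  have hkV : k ≤ Fintype.card V := by
    have := arcConn_le_card_sub_one A
    have := (Nat.div_pos_iff.1 hpos).2
    omega
  obtain ⟨S, -, hS⟩ := Finset.exists_subset_card_eq (s := Finset.univ) (by simpa using hkV)
  refine le_csInf ⟨_, S, hS, rfl⟩ ?_
  rintro _ ⟨S, rfl, rfl⟩
  exact hl ▸ arcConn_div_card_le_lamS A S (by omega)

/-- If `λ(D) = ℓ` and `2 ≤ k ≤ ℓ`, then `λ_k(D) ≥ ⌊ℓ/k⌋`. -/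
theorem lamK_ge_arcConn_div {V : Type*} [Fintype V] (A : Set (V × V)) (k ℓ : ℕ)
    (hl : arcConn A = ℓ) (h2 : 2 ≤ k) (hk : k ≤ ℓ) :
    ℓ / k ≤ lamK A k :=
  lamK_ge_arcConn_div_general A k ℓ hl h2
end
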